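/- Let q = 2^e with e ≥ 1 and let F be the finite field with q² elements. Let a ∈ F, a ≠ 0, and let I be the cardinality of {(x,y) ∈ F×F : x^(q+1) = y^q + y and y = a·x²}. If there exists z ∈ F with z^q = z and z² + z = a^(q+1) (i.e. the absolute trace of a^(q+1) from F_q to F_2 is 0), then I = 1; otherwise I = 2q − 1. -/

import Mathlib

/-!
For `x ≠ 0` put `w = a ^ q * x ^ (q - 1)`. Dividing the curve equation by `x ^ 2` shows that
`(x, a x²)` lies on `H` iff `w² + w = b := a ^ (q + 1)`. Since `b` lies in `F_q` and the trace
`u ↦ u ^ q + u` maps `F` onto `F_q`, the roots `s, s + 1` of `z² + z = b` lie in `F`, and Frobenius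
either fixes both of them (trace `0`) or swaps them. As `x ↦ x ^ (q - 1)` maps `Fˣ` onto the
`(q + 1)`-th roots of unity with fibres of size `q - 1`, the equation `x ^ (q - 1) = w / a ^ q` has
`q - 1` solutions if `w ^ (q + 1) = b` and none otherwise. A root `w` fixed by Frobenius has
`w ^ (q + 1) = w² ≠ b`, a swapped one has `w ^ (q + 1) = w (w + 1) = b`: so besides the origin there
are no points in the first case and `2 (q - 1)` points in the second.
-/

open Polynomial

theorem ncard_setOf_pow_eq_mul_le {R : Type*} [CommRing R] [IsDomain R] {n : ℕ} (hn : 1 < n)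
    (c : R) : {x : R | x ^ n = c * x}.ncard ≤ n := by
  classical
  set P : R[X] := X ^ n - C c * X
  have hdeg : P.natDegree = n := by
    rw [natDegree_sub_eq_left_of_natDegree_lt] <;>
      grind [natDegree_X_pow, natDegree_C_mul_le, natDegree_X_le]
  have hP : P ≠ 0 := ne_zero_of_natDegree_gt (hdeg ▸ hn)
  calc {x : R | x ^ n = c * x}.ncard ≤ (P.roots.toFinset : Set R).ncard := by
        refine Set.ncard_le_ncard (fun x hx => ?_) (Finset.finite_toSet _)
        simp [mem_roots hP, P, hx.symm]
    _ ≤ n := by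
      rw [Set.ncard_coe_finset, ← hdeg]
      exact (Multiset.toFinset_card_le _).trans (card_roots' P)

theorem IsCyclic.ncard_pow_eq {G : Type*} [CommGroup G] [IsCyclic G] [Finite G] {m k : ℕ}
    (hG : Nat.card G = m * k) {y : G} (hy : y ^ k = 1) :
    {x : G | x ^ m = y}.ncard = m := by
  have hmk : m * k ≠ 0 := hG ▸ Nat.card_pos.ne'
  have hrange : (powMonoidHom m : G →* G).range = (powMonoidHom k : G →* G).ker := by
    refine Subgroup.eq_of_le_of_card_ge ?_ ?_
    · rintro _ ⟨x, rfl⟩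
      rw [MonoidHom.mem_ker, powMonoidHom_apply, powMonoidHom_apply, ← pow_mul, ← hG,
        pow_card_eq_one']
    · rw [IsCyclic.card_powMonoidHom_ker, IsCyclic.card_powMonoidHom_range, hG,
        Nat.gcd_mul_left_left, Nat.gcd_mul_right_left,
        Nat.mul_div_cancel_left _ (Nat.pos_of_ne_zero (left_ne_zero_of_mul hmk))]
  obtain ⟨x₀, rfl⟩ : y ∈ (powMonoidHom m : G →* G).range := by rw [hrange]; exact hy
  rw [← Nat.card_coe_set_eq]
  calc Nat.card {x : G | x ^ m = x₀ ^ m}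
      = Nat.card ((powMonoidHom m : G →* G) ⁻¹' {powMonoidHom m x₀}) := rfl
    _ = m := by
      rw [Nat.card_congr (MonoidHom.fiberEquivKer _ x₀), IsCyclic.card_powMonoidHom_ker, hG,
        Nat.gcd_mul_right_left]

namespace FiniteField

variable {F : Type*} [Field F] [Fintype F]

theorem ncard_pow_eq [DecidableEq F] {m k : ℕ} (hF : Fintype.card F = m * k + 1) {t : F}
    (ht : t ≠ 0) : {x : F | x ^ m = t}.ncard = if t ^ k = 1 then m else 0 := by
  have hm : m ≠ 0 := by
    rintro rfl
    have := Fintype.one_lt_card (α := F)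
    omega
  have hx : ∀ x : F, x ^ m = t → x ≠ 0 := by
    rintro x hxt rfl
    exact ht (hxt ▸ zero_pow hm)
  split_ifs with htk
  · have hval : {x : F | x ^ m = t} = Units.val '' {v : Fˣ | v ^ m = Units.mk0 t ht} := by
      ext x
      refine ⟨fun hxt => ⟨Units.mk0 x (hx x hxt), Units.ext (by simpa using hxt), rfl⟩, ?_⟩
      rintro ⟨v, hv, rfl⟩
      simpa using congrArg Units.val hv
    rw [hval, Set.ncard_image_of_injective _ Units.val_injective]
    refine IsCyclic.ncard_pow_eq ?_ (Units.ext (by simpa using htk))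
    rw [Nat.card_eq_fintype_card, Fintype.card_units, hF, Nat.add_sub_cancel]
  · rw [Set.ncard_eq_zero]
    refine Set.eq_empty_of_forall_notMem fun x (hxt : x ^ m = t) => htk ?_
    rw [← hxt, ← pow_mul, ← Nat.add_sub_cancel (m * k) 1, ← hF]
    exact pow_card_sub_one_eq_one x (hx x hxt)

theorem one_lt_of_card_eq_sq {q : ℕ} (hF : Fintype.card F = q ^ 2) : 1 < q := by
  have := Fintype.one_lt_card (α := F)
  by_contra! h
  nlinarith

theorem pow_succ_pow_eq_pow_succ {q : ℕ} (hF : Fintype.card F = q ^ 2) (a : F) :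
    (a ^ (q + 1)) ^ q = a ^ (q + 1) := by
  rw [← pow_mul, add_mul, one_mul, pow_add, ← sq, ← hF, pow_card, pow_succ']

theorem exists_pow_add_self_eq {p e : ℕ} [Fact p.Prime] [CharP F p]
    (hF : Fintype.card F = (p ^ e) ^ 2) {b : F} (hb : b ^ p ^ e = b) :
    ∃ u, u ^ p ^ e + u = b := by
  set q := p ^ e
  have hq : 1 < q := one_lt_of_card_eq_sq hF
  have hadd : ∀ x y : F, (x + y) ^ q = x ^ q + y ^ q := fun x y => add_pow_char_pow x y p e
  have hpow : ∀ u : F, (u ^ q) ^ q = u := fun u => by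
    rw [← pow_mul, ← sq, ← hF, pow_card]
  let T : F →+ F := (iterateFrobenius F p e : F →+ F) + AddMonoidHom.id F
  have hker : Nat.card T.ker ≤ q := by
    have hsub : (T.ker : Set F) ⊆ {u | u ^ q = -1 * u} := fun u (hu : u ^ q + u = 0) => by
      simpa [eq_neg_iff_add_eq_zero] using hu
    rw [← SetLike.coe_sort_coe, Nat.card_coe_set_eq]
    exact (Set.ncard_le_ncard hsub).trans (ncard_setOf_pow_eq_mul_le hq (-1))
  have hcard : q * q ≤ q * Nat.card T.range := by
    rw [← sq, ← hF, ← Nat.card_eq_fintype_card, ← T.ker.card_mul_index, AddSubgroup.index_ker]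
    exact Nat.mul_le_mul_right _ hker
  have hrange : (T.range : Set F) = {u | u ^ q = 1 * u} := by
    refine Set.eq_of_subset_of_ncard_le ?_ ?_
    · rintro _ ⟨u, rfl⟩
      change (u ^ q + u) ^ q = 1 * (u ^ q + u)
      rw [hadd, hpow, one_mul, add_comm]
    · refine (ncard_setOf_pow_eq_mul_le hq 1).trans ?_
      rw [← Nat.card_coe_set_eq, SetLike.coe_sort_coe]
      exact Nat.le_of_mul_le_mul_left hcard (by omega)
  obtain ⟨u, hu⟩ : b ∈ T.range := by
    rw [← SetLike.mem_coe, hrange, Set.mem_ofPred, one_mul]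
    exact hb
  exact ⟨u, hu⟩

end FiniteField

namespace CharTwo

variable {R : Type*} [CommRing R] [CharP R 2]

theorem sq_add_self_sum_pow_two_pow (u : R) (e : ℕ) :
    (∑ i ∈ Finset.range e, u ^ 2 ^ i) ^ 2 + ∑ i ∈ Finset.range e, u ^ 2 ^ i = u ^ 2 ^ e + u := by
  rw [sum_sq, ← sub_eq_add, ← Finset.sum_sub_distrib, ← sub_eq_add]
  simp_rw [← pow_mul, ← pow_succ]
  exact (Finset.sum_range_sub (fun i => u ^ 2 ^ i) e).trans (by rw [pow_zero, pow_one])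

theorem exists_sq_add_self_eq {F : Type*} [Field F] [Fintype F] [CharP F 2] {e : ℕ}
    (hF : Fintype.card F = (2 ^ e) ^ 2) {b : F} (hb : b ^ 2 ^ e = b) : ∃ s, s ^ 2 + s = b := by
  obtain ⟨u, hu⟩ := FiniteField.exists_pow_add_self_eq hF hb
  exact ⟨_, (sq_add_self_sum_pow_two_pow u e).trans hu⟩

variable [IsDomain R]

theorem sq_add_self_eq_iff {s b : R} (hs : s ^ 2 + s = b) {w : R} :
    w ^ 2 + w = b ↔ w = s ∨ w = s + 1 := by
  have key : (w + s) * (w + s + 1) = (w ^ 2 + w) + (s ^ 2 + s) := by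
    linear_combination (w * s) * two_eq_zero (R := R)
  rw [← CharTwo.add_eq_zero (b := b), ← hs, ← key, mul_eq_zero, CharTwo.add_eq_zero, add_assoc,
    CharTwo.add_eq_zero]

theorem pow_two_pow_eq_or {e : ℕ} {s b : R} (hs : s ^ 2 + s = b) (hb : b ^ 2 ^ e = b) :
    s ^ 2 ^ e = s ∨ s ^ 2 ^ e = s + 1 :=
  (sq_add_self_eq_iff hs).1 (by rw [← pow_right_comm, ← add_pow_char_pow, hs, hb])

theorem exists_pow_two_pow_eq_self_iff {e : ℕ} {s b : R} (hs : s ^ 2 + s = b) :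
    (∃ z, z ^ 2 ^ e = z ∧ z ^ 2 + z = b) ↔ s ^ 2 ^ e = s := by
  refine ⟨?_, fun h => ⟨s, h, hs⟩⟩
  rintro ⟨z, hz, hzb⟩
  rcases (sq_add_self_eq_iff hs).1 hzb with rfl | rfl
  · exact hz
  · rwa [add_pow_char_pow, one_pow, add_left_inj] at hz

theorem pow_two_pow_succ_eq_iff {e : ℕ} {s b : R} (hs : s ^ 2 + s = b) (hb : b ^ 2 ^ e = b)
    (hb0 : b ≠ 0) : s ^ (2 ^ e + 1) = b ↔ ¬∃ z, z ^ 2 ^ e = z ∧ z ^ 2 + z = b := by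
  rw [exists_pow_two_pow_eq_self_iff hs, pow_succ]
  rcases pow_two_pow_eq_or hs hb with h | h <;> rw [h]
  · refine iff_of_false (fun hss => hb0 ?_) (not_not_intro rfl)
    have : s = 0 := by linear_combination hs - hss
    simpa [this] using hs.symm
  · exact iff_of_true (by linear_combination hs) (by simp)

theorem pow_succ_eq_add_iff {q : ℕ} (hq : 1 ≤ q) {a x : R} (ha : a ≠ 0) (hx : x ≠ 0) :
    x ^ (q + 1) = (a * x ^ 2) ^ q + a * x ^ 2 ↔
      (a ^ q * x ^ (q - 1)) ^ 2 + a ^ q * x ^ (q - 1) = a ^ (q + 1) := by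
  have hxq : x ^ (q + 1) = x ^ (q - 1) * x ^ 2 := by rw [← pow_add]; congr 1; omega
  have hxq' : (x ^ 2) ^ q = (x ^ (q - 1)) ^ 2 * x ^ 2 := by
    rw [← pow_mul, ← pow_mul, ← pow_add]; congr 1; omega
  have hlhs : x ^ (q + 1) + ((a * x ^ 2) ^ q + a * x ^ 2) =
      (x ^ (q - 1) + a ^ q * (x ^ (q - 1)) ^ 2 + a) * x ^ 2 := by
    rw [hxq, mul_pow, hxq']; ring
  have hrhs : (a ^ q * x ^ (q - 1)) ^ 2 + a ^ q * x ^ (q - 1) + a ^ (q + 1) =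
      a ^ q * (x ^ (q - 1) + a ^ q * (x ^ (q - 1)) ^ 2 + a) := by ring
  rw [← CharTwo.add_eq_zero (b := a ^ (q + 1)), hrhs, ← CharTwo.add_eq_zero, hlhs, mul_eq_zero,
    mul_eq_zero,
    or_iff_left (pow_ne_zero 2 hx), or_iff_right (pow_ne_zero q ha)]

end CharTwo

theorem FiniteField.ncard_hermitian_inter_parabola {F : Type*} [Field F] [Fintype F]
    [DecidableEq F] [CharP F 2] {q : ℕ} (hF : Fintype.card F = q ^ 2) {a s : F} (ha : a ≠ 0)
    (hs : s ^ 2 + s = a ^ (q + 1)) :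
    {x : F | x ^ (q + 1) = (a * x ^ 2) ^ q + a * x ^ 2}.ncard =
      (if s ^ (q + 1) = a ^ (q + 1) then q - 1 else 0) +
        (if (s + 1) ^ (q + 1) = a ^ (q + 1) then q - 1 else 0) + 1 := by
  have hq : 1 < q := one_lt_of_card_eq_sq hF
  have hF' : Fintype.card F = (q - 1) * (q + 1) + 1 := by
    obtain ⟨r, rfl⟩ := Nat.exists_eq_add_of_lt hq
    rw [hF, Nat.add_sub_cancel]; ring
  have haq : a ^ q ≠ 0 := pow_ne_zero q ha
  have hb : a ^ (q + 1) ≠ 0 := pow_ne_zero _ ha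
  have hfiber (w : F) (hw : w ≠ 0) : {x : F | x ^ (q - 1) = w / a ^ q}.ncard =
      if w ^ (q + 1) = a ^ (q + 1) then q - 1 else 0 := by
    simp only [ncard_pow_eq hF' (div_ne_zero hw haq), div_pow, pow_right_comm a q,
      pow_succ_pow_eq_pow_succ hF, div_eq_one_iff_eq hb]
  have hs0 : s ≠ 0 := by rintro rfl; simp [hb.symm] at hs
  have hs1 : s + 1 ≠ 0 := by
    intro h
    rw [CharTwo.add_eq_zero] at h
    rw [h, one_pow, CharTwo.add_self_eq_zero] at hs
    exact hb hs.symm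
  have hset : {x : F | x ^ (q + 1) = (a * x ^ 2) ^ q + a * x ^ 2} =
      insert 0 ({x | x ^ (q - 1) = s / a ^ q} ∪ {x | x ^ (q - 1) = (s + 1) / a ^ q}) := by
    ext x
    rcases eq_or_ne x 0 with rfl | hx
    · simp [zero_pow (Nat.zero_lt_of_lt hq).ne']
    · simp only [Set.mem_ofPred_eq, Set.mem_insert_iff, hx, false_or, Set.mem_union,
        CharTwo.pow_succ_eq_add_iff hq.le ha hx, CharTwo.sq_add_self_eq_iff hs, eq_div_iff haq,
        mul_comm (a ^ q)]
  have h0 : (0 : F) ∉ {x | x ^ (q - 1) = s / a ^ q} ∪ {x | x ^ (q - 1) = (s + 1) / a ^ q} := by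
    simp [zero_pow (Nat.sub_pos_of_lt hq).ne', (div_ne_zero hs0 haq).symm,
      (div_ne_zero hs1 haq).symm]
  have hdisj : Disjoint {x : F | x ^ (q - 1) = s / a ^ q} {x | x ^ (q - 1) = (s + 1) / a ^ q} := by
    refine Set.disjoint_left.2 fun x h1 h2 => ?_
    simp_all [div_left_inj' haq]
  rw [hset, Set.ncard_insert_of_notMem h0, Set.ncard_union_eq hdisj, hfiber s hs0,
    hfiber (s + 1) hs1]

theorem stmt_11_general (q : ℕ) (e : ℕ) (hqe : q = 2 ^ e)
    (F : Type*) [Field F] [Fintype F]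
    (hF : Fintype.card F = q ^ 2) (a : F) (ha : a ≠ 0) (I : ℕ)
    (hI : I = Set.ncard {p : F × F | p.1 ^ (q + 1) = p.2 ^ q + p.2 ∧
        p.2 = a * p.1 ^ 2}) :
    ((∃ z : F, z ^ q = z ∧ z ^ 2 + z = a ^ (q + 1)) → I = 1) ∧
    ((¬ ∃ z : F, z ^ q = z ∧ z ^ 2 + z = a ^ (q + 1)) → I = 2 * q - 1) := by
  classical
  subst hqe
  have : CharP F 2 := charP_of_card_eq_prime_pow (hF.trans (pow_mul 2 e 2).symm)
  have hb := FiniteField.pow_succ_pow_eq_pow_succ hF a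
  have hb0 : a ^ (2 ^ e + 1) ≠ 0 := pow_ne_zero _ ha
  obtain ⟨s, hs⟩ := CharTwo.exists_sq_add_self_eq hF hb
  have hs_add_one := (CharTwo.sq_add_self_eq_iff hs).2 (Or.inr rfl)
  have hgraph : {p : F × F | p.1 ^ (2 ^ e + 1) = p.2 ^ 2 ^ e + p.2 ∧ p.2 = a * p.1 ^ 2} =
      {x | x ^ (2 ^ e + 1) = (a * x ^ 2) ^ 2 ^ e + a * x ^ 2}.graphOn (a * · ^ 2) := by
    ext ⟨x, y⟩
    simp only [Set.mem_ofPred_eq, Set.mem_graphOn, eq_comm (a := y)]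
    constructor <;> rintro ⟨h, rfl⟩ <;> exact ⟨h, rfl⟩
  rw [hI, hgraph, Set.ncard_graphOn, FiniteField.ncard_hermitian_inter_parabola hF ha hs,
    CharTwo.pow_two_pow_succ_eq_iff hs hb hb0, CharTwo.pow_two_pow_succ_eq_iff hs_add_one hb hb0]
  refine ⟨fun h => by simp [h], fun h => ?_⟩
  simp only [h, not_false_eq_true, if_true]
  have := e.one_le_two_pow
  omega

theorem stmt_11 (q : ℕ) (e : ℕ) (he : 1 ≤ e) (hqe : q = 2 ^ e)
    (F : Type*) [Field F] [Fintype F]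
    (hF : Fintype.card F = q ^ 2) (a : F) (ha : a ≠ 0) (I : ℕ)
    (hI : I = Set.ncard {p : F × F | p.1 ^ (q + 1) = p.2 ^ q + p.2 ∧
        p.2 = a * p.1 ^ 2}) :
    ((∃ z : F, z ^ q = z ∧ z ^ 2 + z = a ^ (q + 1)) → I = 1) ∧
    ((¬ ∃ z : F, z ^ q = z ∧ z ^ 2 + z = a ^ (q + 1)) → I = 2 * q - 1) :=
  stmt_11_general q e hqe F hF a ha I hI
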